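/- Let M be a compact connected orientable n-dimensional C^∞ manifold with a volume form ω such that H^l(M,∂M;ℝ)=0 for all 0<l<n, and assume ∂M is diffeomorphic to S^{n-1}. Then there exists φ̄ = φ̄^{(0)}+⋯+φ̄^{(n−1)} with φ̄^{(l)} ∈ 𝒜^{n−1−l,l}(M Diff_{ω,0}(M)^δ_•) such that: (1) dφ̄ = ω̄^{(n)} + δφ̄^{(0)}; (2) φ̄^{(l)}(g₁,…,g_{n−l−1}) pulls back to 0 on ∂M for every l < n−1 and all g₁,…,g_{n−l−1} ∈ Diff_{ω,0}(M,∂M); (3) for every l < n−1, the pullback i^*φ̄^{(l)}(g₁,…,g_{n−l−1}) ∈ Ω^l(∂M) coincides with i^*φ̄^{(l)}(h₁,…,h_{n−l−1}) whenever g_k, h_k ∈ Diff_{ω,0}(M) satisfy g_k|_{∂M} = h_k|_{∂M} for all k. -/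

import Mathlib

namespace TsuboiEuler

/-! ### Group cochains valued in a graded module of differential forms

For a group `G` acting on a manifold by diffeomorphisms, `GC G F k l` models the
space `𝒜^{k,l}` of maps `G^k → Ω^l(M)`; `GCT G F` is an element of the whole double
complex, recorded in every bidegree at once. -/

section GroupCochains

variable {G : Type} [Group G] {F : ℕ → Type} [∀ l, AddCommGroup (F l)]
  [∀ l, Module ℝ (F l)]

/-- The space `𝒜^{k,l}` of `k`-cochains of the group `G` valued in `l`-forms. -/
abbrev GC (G : Type) (F : ℕ → Type) (k l : ℕ) : Type := (Fin k → G) → F l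

variable (pull : ∀ l, G → F l →ₗ[ℝ] F l)
variable (dF : ∀ l, F l →ₗ[ℝ] F (l + 1))
variable (wedge : ∀ p q r : ℕ, p + q = r → F p → F q → F r)

/-- The horizontal (inhomogeneous group-cochain) differential
`δc(g₁,…,g_{k+1}) = c(g₂,…,g_{k+1}) + ∑ (-1)^i c(g₁,…,g_i g_{i+1},…,g_{k+1})
 + (-1)^{k+1} g_{k+1}^* c(g₁,…,g_k)`. -/
def gdel (k l : ℕ) (c : GC G F k l) : GC G F (k + 1) l := fun g =>
  c (fun i => g i.succ)
    + ∑ i : Fin k,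
        ((-1 : ℝ) ^ ((i : ℕ) + 1)) •
          c (fun j =>
              if (j : ℕ) < (i : ℕ) then g (Fin.castSucc j)
              else if (j : ℕ) = (i : ℕ) then g (Fin.castSucc j) * g j.succ
              else g j.succ)
    + ((-1 : ℝ) ^ (k + 1)) • pull l (g (Fin.last k)) (c (fun j => g (Fin.castSucc j)))

/-- The vertical differential `d'' = (-1)^k d` on `𝒜^{k,l}`. -/
def dvv (k l : ℕ) (c : GC G F k l) : GC G F k (l + 1) := fun g =>
  ((-1 : ℝ) ^ k) • dF l (c g)

/-- An element of the double complex `𝒜^{*,*}`, given by all of its bidegree components. -/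
abbrev GCT (G : Type) (F : ℕ → Type) : Type := ∀ k l : ℕ, GC G F k l

/-- The horizontal differential on the total complex. -/
def Dh (c : GCT G F) : GCT G F := fun k l =>
  match k with
  | 0 => 0
  | k + 1 => gdel pull k l (c k l)

/-- The vertical differential on the total complex. -/
def Dv (c : GCT G F) : GCT G F := fun k l =>
  match l with
  | 0 => 0
  | l + 1 => dvv dF k l (c k l)

/-- The total differential `d = δ + d''`. -/
def DT (c : GCT G F) : GCT G F := Dh pull c + Dv dF c

/-- `c` is concentrated in total degree `m`. -/
def IsDeg (m : ℕ) (c : GCT G F) : Prop := ∀ k l, k + l ≠ m → c k l = 0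

/-- The wedge product
`(α∧β)(g₁,…,g_{p+r}) = (g_{p+1}⋯g_{p+r})^* α(g₁,…,g_p) ∧ β(g_{p+1},…,g_{p+r})`
of `α ∈ 𝒜^{p,q}` and `β ∈ 𝒜^{r,s}`. -/
def cwedge {p q r s k l : ℕ} (h1 : p + r = k) (h2 : q + s = l)
    (α : GC G F p q) (β : GC G F r s) : GC G F k l := fun g =>
  wedge q s l h2
    (pull q ((List.ofFn fun i : Fin r => g (Fin.cast h1 (Fin.natAdd p i))).prod)
      (α fun i => g (Fin.cast h1 (Fin.castAdd r i))))
    (β fun i => g (Fin.cast h1 (Fin.natAdd p i)))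

/-- The wedge product on the total complex. -/
def tmulC (c c' : GCT G F) : GCT G F := fun k l =>
  ∑ p ∈ (Finset.range (k + 1)).attach, ∑ q ∈ (Finset.range (l + 1)).attach,
    cwedge pull wedge
      (Nat.add_sub_cancel' (Nat.lt_succ_iff.mp (Finset.mem_range.mp p.2)))
      (Nat.add_sub_cancel' (Nat.lt_succ_iff.mp (Finset.mem_range.mp q.2)))
      (c p.1 q.1) (c' (k - p.1) (l - q.1))

end GroupCochains

/-! ### Group cohomology with trivial real coefficients -/

section RealCochains

variable {G : Type} [Group G]

/-- The inhomogeneous group-cochain differential with trivial real coefficients. -/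
def rdel (k : ℕ) (c : (Fin k → G) → ℝ) : (Fin (k + 1) → G) → ℝ := fun g =>
  c (fun i => g i.succ)
    + ∑ i : Fin k,
        ((-1 : ℝ) ^ ((i : ℕ) + 1)) •
          c (fun j =>
              if (j : ℕ) < (i : ℕ) then g (Fin.castSucc j)
              else if (j : ℕ) = (i : ℕ) then g (Fin.castSucc j) * g j.succ
              else g j.succ)
    + ((-1 : ℝ) ^ (k + 1)) • c (fun j => g (Fin.castSucc j))

/-- `u` is a coboundary of real group cochains. -/
def IsCobdryR (k : ℕ) (u : (Fin k → G) → ℝ) : Prop :=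
  ∃ (j : ℕ) (h : j + 1 = k) (w : (Fin j → G) → ℝ), u = fun g => rdel j w (g ∘ Fin.cast h)

/-- The cohomology class of the cochain `u` in `H^k(BG^δ; ℝ)` vanishes. -/
def ClassZeroR (k : ℕ) (u : (Fin k → G) → ℝ) : Prop := u = 0 ∨ IsCobdryR k u

/-- `u` and `v` represent the same class in `H^k(BG^δ; ℝ)`. -/
def CohomologousR (k : ℕ) (u v : (Fin k → G) → ℝ) : Prop := ClassZeroR k (u - v)

end RealCochains

/-! ### Abstract geometric data for `(M, ∂M ≅ S^{n-1}, ω)` together with the groups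
`Diff_{ω,0}(M)`, `Diff₀(∂M)` and `Diff_{ω,0}(M,∂M)`.

`FullGeom n` records the de Rham complexes of a compact connected oriented
`n`-manifold `M` with boundary `∂M`, the restriction `i^* : Ω^*(M) → Ω^*(∂M)`,
integration, a volume form `ω`, the group `GM` (modelling `Diff_{ω,0}(M)`), the
group `Gb` (modelling `Diff₀(∂M)`), the boundary-restriction homomorphism
`r : GM → Gb` (which is surjective: every boundary diffeomorphism extends), and the
subgroup `Grel ≤ GM` (modelling `Diff_{ω,0}(M,∂M)`), contained in the kernel of
`r`. -/

structure FullGeom (n : ℕ) where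
  /-- `Ω^l(M)` -/
  Fm : ℕ → Type
  [acg : ∀ l, AddCommGroup (Fm l)]
  [mod : ∀ l, Module ℝ (Fm l)]
  /-- exterior derivative -/
  dF : ∀ l, Fm l →ₗ[ℝ] Fm (l + 1)
  dF_dF : ∀ (l) (α : Fm l), dF (l + 1) (dF l α) = 0
  /-- wedge product -/
  wedge : ∀ p q r : ℕ, p + q = r → Fm p → Fm q → Fm r
  wedge_add_left : ∀ (p q r) (h : p + q = r) (α α' : Fm p) (β : Fm q),
    wedge p q r h (α + α') β = wedge p q r h α β + wedge p q r h α' β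
  wedge_add_right : ∀ (p q r) (h : p + q = r) (α : Fm p) (β β' : Fm q),
    wedge p q r h α (β + β') = wedge p q r h α β + wedge p q r h α β'
  wedge_smul_left : ∀ (p q r) (h : p + q = r) (a : ℝ) (α : Fm p) (β : Fm q),
    wedge p q r h (a • α) β = a • wedge p q r h α β
  wedge_smul_right : ∀ (p q r) (h : p + q = r) (a : ℝ) (α : Fm p) (β : Fm q),
    wedge p q r h α (a • β) = a • wedge p q r h α β
  wedge_comm : ∀ (p q r) (h : p + q = r) (h' : q + p = r) (α : Fm p) (β : Fm q),
    wedge p q r h α β = ((-1 : ℝ) ^ (p * q)) • wedge q p r h' β α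
  dF_wedge : ∀ (p q r) (h : p + q = r) (hp : p + 1 + q = r + 1) (hq : p + (q + 1) = r + 1)
    (α : Fm p) (β : Fm q),
    dF r (wedge p q r h α β)
      = wedge (p + 1) q (r + 1) hp (dF p α) β
        + ((-1 : ℝ) ^ p) • wedge p (q + 1) (r + 1) hq α (dF q β)
  /-- forms of degree `> n` vanish -/
  top : ∀ l, n < l → ∀ α : Fm l, α = 0
  /-- the constant function `1 ∈ Ω^0(M)` -/
  oneF : Fm 0
  dF_oneF : dF 0 oneF = 0
  oneF_wedge : ∀ (q) (α : Fm q), wedge 0 q q (Nat.zero_add q) oneF α = α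
  /-- `M` is connected: closed `0`-forms are constants -/
  connM : ∀ α : Fm 0, dF 0 α = 0 → ∃ a : ℝ, α = a • oneF
  /-- `Ω^l(∂M)` -/
  FmB : ℕ → Type
  [acgB : ∀ l, AddCommGroup (FmB l)]
  [modB : ∀ l, Module ℝ (FmB l)]
  dB : ∀ l, FmB l →ₗ[ℝ] FmB (l + 1)
  dB_dB : ∀ (l) (β : FmB l), dB (l + 1) (dB l β) = 0
  /-- restriction `i^*` to the boundary -/
  res : ∀ l, Fm l →ₗ[ℝ] FmB l
  res_dF : ∀ (l) (α : Fm l), res (l + 1) (dF l α) = dB l (res l α)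
  /-- the constant function `1 ∈ Ω^0(∂M)` -/
  oneB : FmB 0
  res_oneF : res 0 oneF = oneB
  /-- `∂M` is connected -/
  connB : ∀ β : FmB 0, dB 0 β = 0 → ∃ a : ℝ, β = a • oneB
  /-- integration of top forms over `M` -/
  intM : Fm n →ₗ[ℝ] ℝ
  /-- integration over the boundary sphere -/
  intB : ∀ l, l + 1 = n → FmB l →ₗ[ℝ] ℝ
  /-- Stokes' formula -/
  stokes : ∀ (l) (h : l + 1 = n) (α : Fm l),
    intM (cast (congrArg Fm h) (dF l α)) = intB l h (res l α)
  /-- the group `Diff_{ω,0}(M)` of volume-preserving diffeomorphisms of `M` -/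
  GM : Type
  [grpM : Group GM]
  pull : ∀ l, GM → Fm l →ₗ[ℝ] Fm l
  pull_one : ∀ (l) (α : Fm l), pull l 1 α = α
  pull_mul : ∀ (l) (g h : GM) (α : Fm l), pull l (g * h) α = pull l h (pull l g α)
  pull_dF : ∀ (l) (g : GM) (α : Fm l), dF l (pull l g α) = pull (l + 1) g (dF l α)
  pull_wedge : ∀ (p q r) (h : p + q = r) (g : GM) (α : Fm p) (β : Fm q),
    pull r g (wedge p q r h α β) = wedge p q r h (pull p g α) (pull q g β)
  pull_oneF : ∀ g : GM, pull 0 g oneF = oneF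
  intM_pull : ∀ (g : GM) (α : Fm n), intM (pull n g α) = intM α
  /-- the group `Diff₀(∂M)` of orientation-preserving diffeomorphisms of `∂M ≅ S^{n-1}` -/
  Gb : Type
  [grpB : Group Gb]
  pullB : ∀ l, Gb → FmB l →ₗ[ℝ] FmB l
  pullB_one : ∀ (l) (β : FmB l), pullB l 1 β = β
  pullB_mul : ∀ (l) (γ γ' : Gb) (β : FmB l), pullB l (γ * γ') β = pullB l γ' (pullB l γ β)
  pullB_dB : ∀ (l) (γ : Gb) (β : FmB l), dB l (pullB l γ β) = pullB (l + 1) γ (dB l β)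
  pullB_oneB : ∀ γ : Gb, pullB 0 γ oneB = oneB
  intB_pullB : ∀ (l) (h : l + 1 = n) (γ : Gb) (β : FmB l),
    intB l h (pullB l γ β) = intB l h β
  /-- restriction of diffeomorphisms to the boundary -/
  rHom : GM →* Gb
  /-- every orientation-preserving diffeomorphism of `∂M` extends to `M` -/
  rHom_surj : Function.Surjective rHom
  res_pull : ∀ (l) (g : GM) (α : Fm l), res l (pull l g α) = pullB l (rHom g) (res l α)
  /-- the subgroup `Diff_{ω,0}(M,∂M)` of diffeomorphisms fixing `∂M` pointwise -/
  Grel : Subgroup GM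
  rHom_Grel : ∀ g ∈ Grel, rHom g = 1
  /-- the volume form `ω` -/
  ωM : Fm n
  pull_ωM : ∀ g : GM, pull n g ωM = ωM
  vol_pos : 0 < intM ωM

attribute [instance] FullGeom.acg FullGeom.mod FullGeom.acgB FullGeom.modB
  FullGeom.grpM FullGeom.grpB

namespace FullGeom

variable {n : ℕ} (D : FullGeom n)

/-- The action of the subgroup `Diff_{ω,0}(M,∂M)` on forms. -/
def pullRel : ∀ l, D.Grel → D.Fm l →ₗ[ℝ] D.Fm l := fun l g => D.pull l (g : D.GM)

/-- `ω^{(n)}` as an element of the double complex of `Diff_{ω,0}(M)`-cochains. -/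
def omCM : GCT D.GM D.Fm := fun k l _ =>
  if h : k = 0 ∧ l = n then cast (congrArg D.Fm h.2.symm) D.ωM else 0

/-- `ω^{(n)}` as an element of the double complex of `Diff_{ω,0}(M,∂M)`-cochains. -/
def omCRel : GCT D.Grel D.Fm := fun k l _ =>
  if h : k = 0 ∧ l = n then cast (congrArg D.Fm h.2.symm) D.ωM else 0

/-- `φ` is as in the definition of `c(M)`: total degree `n-1`, `dφ = ω^{(n)}`, and
components of form degree `≤ n-2` pull back to `0` on `∂M`. -/
def AdmissibleRel (φ : GCT D.Grel D.Fm) : Prop :=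
  IsDeg (n - 1) φ ∧ DT D.pullRel D.dF φ = D.omCRel ∧
    ∀ k l, l + 2 ≤ n → ∀ g : Fin k → D.Grel, D.res l (φ k l g) = 0

/-- The cocycle `(g₁,…,g_{n-1}) ↦ ∫_M φ^{(0)}(g₁,…,g_{n-1}) ∧ ω` representing
`c(M)`. -/
def uRel (φ : GCT D.Grel D.Fm) : (Fin (n - 1) → D.Grel) → ℝ := fun g =>
  D.intM (D.wedge 0 n n (Nat.zero_add n) (φ (n - 1) 0 g) D.ωM)

/-- Conditions (1)–(3) of Lemma 5.1 on `φ̄ ∈ 𝒜^{n-1}(M Diff_{ω,0}(M)^δ_•)`: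
(1) `dφ̄ = ω̄^{(n)} + δφ̄^{(0)}`;
(2) `φ̄^{(l)}(g₁,…,g_{n-l-1})` pulls back to `0` on `∂M` for `l < n-1` whenever all
`gᵢ ∈ Diff_{ω,0}(M,∂M)`;
(3) for `l < n-1`, `i^* φ̄^{(l)}(g₁,…,g_{n-l-1})` only depends on the restrictions
`gᵢ|_{∂M}`. -/
def BarPhi (φb : GCT D.GM D.Fm) : Prop :=
  IsDeg (n - 1) φb ∧
  DT D.pull D.dF φb
      = D.omCM + (fun k l => if k = n ∧ l = 0 then Dh D.pull φb k l else 0) ∧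
  (∀ k l, l + 2 ≤ n → ∀ g : Fin k → D.GM, (∀ i, g i ∈ D.Grel) →
      D.res l (φb k l g) = 0) ∧
  (∀ k l, l + 2 ≤ n → ∀ g h : Fin k → D.GM, (∀ i, D.rHom (g i) = D.rHom (h i)) →
      D.res l (φb k l g) = D.res l (φb k l h))

/-- The cochain `u = ∫_M φ̄^{(0)} ∧ ω̄^{(n)}` on `Diff_{ω,0}(M)`. -/
def uBar (φb : GCT D.GM D.Fm) : (Fin (n - 1) → D.GM) → ℝ := fun g =>
  D.intM (D.wedge 0 n n (Nat.zero_add n) (φb (n - 1) 0 g) D.ωM)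

/-- `χ` is the `n`-cochain of `Diff₀(∂M)` with `r^*χ = δφ̄^{(0)}`; here
`δφ̄^{(0)}(g₁,…,g_n)` is a constant function on `M` and `r^*χ = δφ̄^{(0)}` means
that this constant equals `χ(g₁|_{∂M},…,g_n|_{∂M})`. -/
def IsChi (φb : GCT D.GM D.Fm) (χ : (Fin n → D.Gb) → ℝ) : Prop :=
  ∀ g : Fin n → D.GM, Dh D.pull φb n 0 g = χ (fun i => D.rHom (g i)) • D.oneF

/-- A zig-zag `ψ̄ = ψ̄^{(0)} + ⋯ + ψ̄^{(n-1)}` in the double complex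
`𝒜^{*,*}(S^{n-1} Diff₀(S^{n-1})^δ_•)` starting from a closed `(n-1)`-form
`ψ̄^{(n-1)} ∈ Ω^{n-1}(S^{n-1})` of total integral `1`, i.e. representing the
generator `α ∈ E_n^{0,n-1} ≅ H^{n-1}(S^{n-1})`; by definition of the Euler class
`[−δψ̄^{(0)}] = e` (since `d_n(α) = [δψ̄^{(0)}]` and `e = −d_n(α)`). -/
def UnitZigZag (ψ : GCT D.Gb D.FmB) : Prop :=
  IsDeg (n - 1) ψ ∧ (∀ k l, 1 ≤ l → DT D.pullB D.dB ψ k l = 0) ∧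
    ∀ h : n - 1 + 1 = n, D.intB (n - 1) h (ψ 0 (n - 1) Fin.elim0) = 1

/-- `w` is a real `n`-cocycle of `Diff₀(S^{n-1})` with `δψ̄^{(0)} = w · 1` for a unit
zig-zag `ψ̄`; by the spectral-sequence definition of the Euler class of foliated
`S^{n-1}`-bundles, the class of `-w` equals the Euler class `e`. -/
def EulerFrom (ψ : GCT D.Gb D.FmB) (w : (Fin n → D.Gb) → ℝ) : Prop :=
  D.UnitZigZag ψ ∧ ∀ g : Fin n → D.Gb, Dh D.pullB ψ n 0 g = w g • D.oneB

/-- `H^l(M,∂M;ℝ) = 0` for `0 < l < n` and `H^0(M,∂M;ℝ) = 0`. -/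
def RelAcyclic : Prop :=
  (∀ α : D.Fm 0, D.dF 0 α = 0 → D.res 0 α = 0 → α = 0) ∧
    ∀ l, l + 1 < n → ∀ α : D.Fm (l + 1), D.dF (l + 1) α = 0 → D.res (l + 1) α = 0 →
      ∃ β : D.Fm l, D.res l β = 0 ∧ D.dF l β = α

/-- `H^l(M;ℝ) = 0` for `0 < l < n`, and `H^n(M;ℝ) = 0` (so that `ω` is exact);
these follow from `H^l(M,∂M;ℝ) = 0` and `∂M ≅ S^{n-1}`. -/
def AbsAcyclic : Prop :=
  (∀ l, l + 1 < n → ∀ α : D.Fm (l + 1), D.dF (l + 1) α = 0 →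
      ∃ β : D.Fm l, D.dF l β = α) ∧
    ∃ β : D.Fm (n - 1), ∀ h : n - 1 + 1 = n,
      cast (congrArg D.Fm h) (D.dF (n - 1) β) = D.ωM

/-- The boundary is the sphere `S^{n-1}`: `H^l(∂M;ℝ) = 0` for `0 < l < n-1`. -/
def SphereBoundary : Prop :=
  ∀ l, l + 2 < n → ∀ β : D.FmB (l + 1), D.dB (l + 1) β = 0 →
    ∃ γ : D.FmB l, D.dB l γ = β

/-- `i^* : Ω^l(M) → Ω^l(∂M)` is surjective. -/
def ResSurj : Prop := ∀ l, Function.Surjective (D.res l)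

end FullGeom

/-! Write `ω = dβ` and start the zig-zag with `φ̄^{(n-1)} = β`. Since `d` commutes with `δ`
and `δδ = 0`, each `δφ̄^{(l+1)}` is closed, and the vanishing of `H^l(M)` and `H^l(M,∂M)` in
the intermediate degrees yields `φ̄^{(l)}` with `dφ̄^{(l)} = ±δφ̄^{(l+1)}`. The boundary
conditions are kept by choosing these primitives first on representatives of the boundary
restrictions and correcting them by relative primitives; since `i^*` intertwines `δ` with the
cochain differential of `Diff₀(∂M)`, the conditions pass from `φ̄^{(l+1)}` to `δφ̄^{(l+1)}`.
The identity `δδ = 0` comes from Mathlib's inhomogeneous cochains of `Gᵐᵒᵖ`. -/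

section Reversal

variable {G X : Type*}

/-- Reversing the arguments turns cochains for a right action of `G` into cochains for the
left action of `Gᵐᵒᵖ`. -/
def revOp {k : ℕ} (c : (Fin k → G) → X) : (Fin k → Gᵐᵒᵖ) → X :=
  fun h => c fun i => (h i.rev).unop

lemma revOp_injective {k : ℕ} : Function.Injective (revOp (G := G) (X := X) (k := k)) := by
  intro c c' h
  funext g
  simpa [revOp] using congrFun h fun i => MulOpposite.op (g i.rev)

variable [Mul G]

lemma contractNth_last_op_rev {k : ℕ} (g : Fin (k + 1) → G) :
    (fun i : Fin k =>
        (Fin.contractNth (Fin.last k) (· * ·) (fun j => MulOpposite.op (g j.rev)) i.rev).unop)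
      = fun i => g i.succ := by
  funext i
  rw [Fin.contractNth_apply_of_lt _ _ _ _ (by rw [Fin.val_last]; exact i.rev.isLt)]
  simp [Fin.rev_castSucc]

lemma contractNth_castSucc_op_rev {k : ℕ} (g : Fin (k + 1) → G) (p : Fin k) :
    (fun i : Fin k =>
        (Fin.contractNth p.castSucc (· * ·) (fun j => MulOpposite.op (g j.rev)) i.rev).unop)
      = Fin.contractNth p.rev.castSucc (· * ·) g := by
  funext i
  have hp : (p.rev : ℕ) = k - (p + 1) := Fin.val_rev p
  have hi : (i.rev : ℕ) = k - (i + 1) := Fin.val_rev i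
  rcases lt_trichotomy (i : ℕ) p.rev with h | h | h
  · rw [Fin.contractNth_apply_of_gt _ _ _ _ (by simp; omega),
      Fin.contractNth_apply_of_lt _ _ _ _ (by simpa using h)]
    simp [Fin.rev_succ]
  · rw [Fin.contractNth_apply_of_eq _ _ _ _ (by simp; omega),
      Fin.contractNth_apply_of_eq _ _ _ _ (by simpa using h)]
    simp [Fin.rev_succ, Fin.rev_castSucc]
  · rw [Fin.contractNth_apply_of_lt _ _ _ _ (by simp; omega),
      Fin.contractNth_apply_of_gt _ _ _ _ (by simpa using h)]
    simp [Fin.rev_castSucc]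

lemma Fin.contractNth_one {G : Type*} [MulOneClass G] {k : ℕ} (j : Fin (k + 1)) :
    Fin.contractNth j (· * ·) (1 : Fin (k + 1) → G) = 1 := by
  funext i
  simp only [Fin.contractNth, Pi.one_apply, mul_one, ite_self]

end Reversal

section CochainDifferential

variable {G : Type} [Group G] {F : ℕ → Type} [∀ l, AddCommGroup (F l)]
  [∀ l, Module ℝ (F l)] (pull : ∀ l, G → F l →ₗ[ℝ] F l)

omit [Group G] in
lemma dvv_zero (dF : ∀ l, F l →ₗ[ℝ] F (l + 1)) (k l : ℕ) :
    dvv (G := G) dF k l 0 = 0 := by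
  funext g
  simp [dvv]

lemma gdel_zero (k l : ℕ) : gdel pull k l (0 : GC G F k l) = 0 := by
  funext g
  simp [gdel]

lemma gdel_smul (k l : ℕ) (a : ℝ) (c : GC G F k l) :
    gdel pull k l (fun g => a • c g) = fun g => a • gdel pull k l c g := by
  funext g
  simp only [gdel, map_smul, smul_add, Finset.smul_sum, smul_comm a]

lemma gdel_apply (k l : ℕ) (c : GC G F k l) (g : Fin (k + 1) → G) :
    gdel pull k l c g = c (fun i => g i.succ)
      + ∑ i : Fin k, ((-1 : ℝ) ^ ((i : ℕ) + 1)) • c (Fin.contractNth i.castSucc (· * ·) g)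
      + ((-1 : ℝ) ^ (k + 1)) • pull l (g (Fin.last k)) (c fun j => g j.castSucc) :=
  rfl

section
variable {l : ℕ} (hone : ∀ α, pull l 1 α = α)
  (hmul : ∀ g h α, pull l (g * h) α = pull l h (pull l g α))

def opRep : Representation ℝ Gᵐᵒᵖ (F l) where
  toFun g := pull l g.unop
  map_one' := LinearMap.ext hone
  map_mul' g h := LinearMap.ext fun α => hmul h.unop g.unop α

lemma d_revOp (k : ℕ) (c : GC G F k l) :
    inhomogeneousCochains.d (Rep.of (opRep pull hone hmul)) k (revOp c)
      = ((-1 : ℝ) ^ (k + 1)) • revOp (gdel pull k l c) := by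
  funext h
  obtain ⟨g, rfl⟩ : ∃ g : Fin (k + 1) → G, h = fun i => MulOpposite.op (g i.rev) :=
    ⟨fun i => (h i.rev).unop, by simp⟩
  -- unfold Mathlib's differential at the reversed tuple
  show pull l (g (Fin.rev 0)) (c fun i => g i.rev.succ.rev)
      + ∑ p : Fin (k + 1), (-1 : ℝ) ^ ((p : ℕ) + 1) •
          c (fun i => (Fin.contractNth p (· * ·) (fun j => MulOpposite.op (g j.rev)) i.rev).unop)
      = ((-1 : ℝ) ^ (k + 1)) • gdel pull k l c fun i => g i.rev.rev
  rw [Fin.sum_univ_castSucc, contractNth_last_op_rev]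
  simp only [contractNth_castSucc_op_rev, Fin.rev_zero, Fin.rev_succ, Fin.rev_rev, Fin.val_last,
    Fin.val_castSucc]
  have hsum : ∑ p : Fin k, (-1 : ℝ) ^ ((p : ℕ) + 1) • c (Fin.contractNth p.rev.castSucc (· * ·) g)
      = ∑ i : Fin k, ((-1 : ℝ) ^ (k + 1) * (-1) ^ ((i : ℕ) + 1)) •
          c (Fin.contractNth i.castSucc (· * ·) g) := by
    rw [← Equiv.sum_comp Fin.revPerm]
    refine Finset.sum_congr rfl fun i _ => ?_
    simp only [Fin.revPerm_apply, Fin.rev_rev, ← pow_add]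
    congr 1
    rw [Fin.val_rev, neg_one_pow_eq_pow_mod_two, neg_one_pow_eq_pow_mod_two (n := k + 1 + _)]
    congr 1
    omega
  have hsq : (-1 : ℝ) ^ (k + 1) * (-1) ^ (k + 1) = 1 := by
    rw [← pow_add, Even.neg_one_pow ⟨k + 1, rfl⟩]
  rw [gdel_apply, hsum]
  simp only [smul_add, Finset.smul_sum, smul_smul, hsq, one_smul]
  abel

end

theorem gdel_gdel {l : ℕ} (hone : ∀ α, pull l 1 α = α)
    (hmul : ∀ g h α, pull l (g * h) α = pull l h (pull l g α)) (k : ℕ) (c : GC G F k l) :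
    gdel pull (k + 1) l (gdel pull k l c) = 0 := by
  have hdd := congrArg (fun f => f.hom (revOp c))
    (groupCohomology.inhomogeneousCochains.d_comp_d k (Rep.of (opRep pull hone hmul)))
  simp only [ModuleCat.hom_comp, LinearMap.comp_apply, ModuleCat.hom_zero, LinearMap.zero_apply]
    at hdd
  rw [d_revOp, map_smul, d_revOp, smul_smul, smul_eq_zero] at hdd
  exact revOp_injective (a₂ := 0) (hdd.resolve_left (by simp))

end CochainDifferential

namespace FullGeom

variable {n : ℕ} (D : FullGeom n)

/-- Conditions (3) and (2) of `BarPhi` on a single component. -/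
def BoundaryControlled {k l : ℕ} (c : GC D.GM D.Fm k l) : Prop :=
  (∀ g g' : Fin k → D.GM, D.rHom ∘ g = D.rHom ∘ g' → D.res l (c g) = D.res l (c g')) ∧
    D.res l (c 1) = 0

/-- The sign makes `δc + d''c' = 0`, as `d'' = (-1)^(k+1) d` on `𝒜^{k+1,*}`. -/
def ZigZagStep {k l : ℕ} (c : GC D.GM D.Fm k (l + 1)) (c' : GC D.GM D.Fm (k + 1) l) : Prop :=
  (∀ g, D.dF l (c' g) = ((-1 : ℝ) ^ k) • gdel D.pull k (l + 1) c g) ∧ D.BoundaryControlled c'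

lemma dF_gdel {k l : ℕ} (c : GC D.GM D.Fm k l) (g : Fin (k + 1) → D.GM) :
    D.dF l (gdel D.pull k l c g) = gdel D.pull k (l + 1) (fun t => D.dF l (c t)) g := by
  simp only [gdel, map_add, map_sum, map_smul, D.pull_dF]

variable {D}

lemma BoundaryControlled.res_eq_zero {k l : ℕ} {c : GC D.GM D.Fm k l}
    (hc : D.BoundaryControlled c) (g : Fin k → D.GM) (hg : ∀ i, D.rHom (g i) = 1) :
    D.res l (c g) = 0 :=
  (hc.1 g 1 (funext fun i => by simp [hg i])).trans hc.2

lemma BoundaryControlled.smul {k l : ℕ} {c : GC D.GM D.Fm k l} (hc : D.BoundaryControlled c)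
    (a : ℝ) : D.BoundaryControlled fun g => a • c g :=
  ⟨fun g g' h => by simp only [map_smul, hc.1 g g' h], by simp only [map_smul, hc.2, smul_zero]⟩

lemma BoundaryControlled.gdel {k l : ℕ} {c : GC D.GM D.Fm k l} (hc : D.BoundaryControlled c) :
    D.BoundaryControlled (gdel D.pull k l c) := by
  refine ⟨fun g g' hgg => ?_, ?_⟩
  · simp only [gdel_apply, map_add, map_sum, map_smul, D.res_pull]
    have hcon : ∀ i : Fin k, D.rHom ∘ Fin.contractNth i.castSucc (· * ·) g
        = D.rHom ∘ Fin.contractNth i.castSucc (· * ·) g' := fun i => by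
      rw [Fin.comp_contractNth _ _ (map_mul D.rHom), Fin.comp_contractNth _ _ (map_mul D.rHom),
        hgg]
    rw [hc.1 _ _ (congrArg (· ∘ Fin.succ) hgg), hc.1 _ _ (congrArg (· ∘ Fin.castSucc) hgg),
      show D.rHom (g (Fin.last k)) = D.rHom (g' (Fin.last k)) from congrFun hgg _]
    simp only [hc.1 _ _ (hcon _)]
  · have h1 : D.res l (c fun _ => 1) = 0 := hc.2
    simp [gdel_apply, D.res_pull, Fin.contractNth_one, hc.2, h1]

lemma boundaryControlled_gdel_const {l : ℕ} (α : D.Fm l) :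
    D.BoundaryControlled (gdel D.pull 0 l fun _ => α) := by
  refine ⟨fun g g' hgg => ?_, ?_⟩
  · simp [gdel_apply, D.res_pull,
      show D.rHom (g 0) = D.rHom (g' 0) from congrFun hgg 0]
  · simp [gdel_apply, D.pull_one]

lemma exists_primitive (hrel : D.RelAcyclic) (habs : D.AbsAcyclic) {l : ℕ} (hl : l + 1 < n)
    (α : D.Fm (l + 1)) (hα : D.dF (l + 1) α = 0) :
    ∃ β : D.Fm l, D.dF l β = α ∧ (D.res (l + 1) α = 0 → D.res l β = 0) := by
  by_cases hres : D.res (l + 1) α = 0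
  · obtain ⟨β, hβres, hβ⟩ := hrel.2 l hl α hα hres
    exact ⟨β, hβ, fun _ => hβres⟩
  · obtain ⟨β, hβ⟩ := habs.1 l hl α hα
    exact ⟨β, hβ, fun h => absurd h hres⟩

/-- Primitives are first chosen on a set of representatives `σ(γ)` of the boundary
restrictions `γ`, then corrected by relative primitives, which exist because the restriction
of `ψ(g) - ψ(σ(g|_{∂M}))` vanishes. -/
lemma exists_boundaryControlled_primitive (hrel : D.RelAcyclic) (habs : D.AbsAcyclic)
    {k l : ℕ} (hl : l + 1 < n) (ψ : GC D.GM D.Fm k (l + 1))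
    (hψ : ∀ g, D.dF (l + 1) (ψ g) = 0) (hψb : D.BoundaryControlled ψ) :
    ∃ η : GC D.GM D.Fm k l, (∀ g, D.dF l (η g) = ψ g) ∧ D.BoundaryControlled η := by
  set σ := Function.surjInv D.rHom_surj
  have hσ : ∀ γ : Fin k → D.Gb, D.rHom ∘ (σ ∘ γ) = γ :=
    fun γ => funext fun i => Function.surjInv_eq D.rHom_surj (γ i)
  choose η₀ hη₀ hη₀res using fun γ : Fin k → D.Gb =>
    exists_primitive hrel habs hl (ψ (σ ∘ γ)) (hψ _)
  choose θ hθres hθ using fun g : Fin k → D.GM =>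
    hrel.2 l hl (ψ g - ψ (σ ∘ D.rHom ∘ g)) (by rw [map_sub, hψ, hψ, sub_zero])
      (by rw [map_sub, hψb.1 g _ (hσ _).symm, sub_self])
  refine ⟨fun g => η₀ (D.rHom ∘ g) + θ g, fun g => ?_, fun g g' hgg => ?_, ?_⟩
  · rw [map_add, hη₀, hθ, add_sub_cancel]
  · rw [map_add, map_add, hθres, hθres, hgg]
  · have h1 : D.rHom ∘ (1 : Fin k → D.GM) = 1 := funext fun _ => map_one D.rHom
    rw [map_add, hθres, add_zero, h1]
    exact hη₀res 1 ((hψb.1 _ 1 ((hσ 1).trans h1.symm)).trans hψb.2)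

lemma ZigZagStep.dF_gdel_eq_zero {k l : ℕ} {c : GC D.GM D.Fm k (l + 1)}
    {c' : GC D.GM D.Fm (k + 1) l} (h : D.ZigZagStep c c') (g : Fin (k + 2) → D.GM) :
    D.dF l (gdel D.pull (k + 1) l c' g) = 0 := by
  rw [dF_gdel, funext h.1, gdel_smul, gdel_gdel D.pull (D.pull_one _) (D.pull_mul _)]
  simp

lemma exists_zigZagStep (hrel : D.RelAcyclic) (habs : D.AbsAcyclic) {k l : ℕ}
    (hl : l + 1 < n) (c : GC D.GM D.Fm k (l + 1))
    (hc : ∀ g, D.dF (l + 1) (gdel D.pull k (l + 1) c g) = 0)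
    (hcb : D.BoundaryControlled (gdel D.pull k (l + 1) c)) :
    ∃ c', D.ZigZagStep c c' :=
  exists_boundaryControlled_primitive hrel habs hl _
    (fun g => by rw [map_smul, hc, smul_zero]) (hcb.smul _)

section ZigZag

variable {m : ℕ} (D : FullGeom (m + 1))

/-- The components `φ̄^{(l)} ∈ 𝒜^{k,l}`, `k + l = m`, of the zig-zag starting from a
primitive `β` of `ω`. -/
noncomputable def zigzag (β : D.Fm m) : ∀ k l, k + l = m → GC D.GM D.Fm k l
  | 0, _, h => fun _ => cast (congrArg D.Fm (by omega)) β
  | k + 1, l, _ => Classical.epsilon (D.ZigZagStep (zigzag β k (l + 1) (by omega)))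

noncomputable def zigzagCochain (β : D.Fm m) : GCT D.GM D.Fm := fun k l =>
  if h : k + l = m then D.zigzag β k l h else 0

variable {D}

lemma zigZagStep_zigzag (hrel : D.RelAcyclic) (habs : D.AbsAcyclic) {β : D.Fm m}
    (hβ : D.dF m β = D.ωM) (k : ℕ) :
    ∀ l (h : k + l + 1 = m),
      D.ZigZagStep (D.zigzag β k (l + 1) (by omega)) (D.zigzag β (k + 1) l (by omega)) := by
  induction k with
  | zero =>
    intro l h
    obtain rfl : m = l + 1 := by omega
    refine Classical.epsilon_spec (exists_zigZagStep hrel habs (by omega) _ (fun g => ?_)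
      (boundaryControlled_gdel_const β))
    simp [gdel_apply, D.pull_dF, hβ, D.pull_ωM]
  | succ k ih =>
    intro l h
    have hprev := ih (l + 1) (by omega)
    exact Classical.epsilon_spec (exists_zigZagStep hrel habs (by omega) _
      hprev.dF_gdel_eq_zero hprev.2.gdel)

lemma DT_eq_of_zigzag (Φ : GCT D.GM D.Fm) (hdeg : IsDeg m Φ)
    (htop : ∀ g, D.dF m (Φ 0 m g) = D.ωM)
    (hstep : ∀ k l, k + l + 1 = m → ∀ g,
      D.dF l (Φ (k + 1) l g) = ((-1 : ℝ) ^ k) • gdel D.pull k (l + 1) (Φ k (l + 1)) g) :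
    DT D.pull D.dF Φ
      = D.omCM + fun k l => if k = m + 1 ∧ l = 0 then Dh D.pull Φ k l else 0 := by
  funext k l g
  rcases k with _ | k <;> rcases l with _ | l
  · simp [DT, Dh, Dv, omCM]
  · by_cases hl : l = m
    · subst hl
      simp [DT, Dh, Dv, dvv, omCM, htop]
    · simp [DT, Dh, Dv, omCM, hdeg 0 l (by omega), dvv_zero, hl]
  · by_cases hk : k = m
    · subst hk
      simp [DT, Dh, Dv, omCM]
    · simp [DT, Dh, Dv, omCM, hdeg k 0 (by omega), gdel_zero, hk]
  · by_cases hkl : k + l + 1 = m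
    · have hsign : (-1 : ℝ) ^ (k + 1) * (-1) ^ k = -1 := by
        rw [← pow_add, Odd.neg_one_pow ⟨k, by ring⟩]
      simp [DT, Dh, Dv, dvv, omCM, hstep k l hkl, smul_smul, hsign]
    · simp [DT, Dh, Dv, omCM, hdeg k (l + 1) (by omega), hdeg (k + 1) l (by omega), gdel_zero,
        dvv_zero]

lemma barPhi_zigzagCochain (hrel : D.RelAcyclic) (habs : D.AbsAcyclic) {β : D.Fm m}
    (hβ : D.dF m β = D.ωM) : D.BarPhi (D.zigzagCochain β) := by
  have hΦ : ∀ k l (h : k + l = m), D.zigzagCochain β k l = D.zigzag β k l h :=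
    fun k l h => dif_pos h
  have hdeg : IsDeg m (D.zigzagCochain β) := fun k l h => dif_neg h
  have hbc : ∀ k l, l + 2 ≤ m + 1 → D.BoundaryControlled (D.zigzagCochain β k l) := by
    intro k l hl
    by_cases h : k + l = m
    · obtain ⟨k, rfl⟩ : ∃ k', k = k' + 1 := ⟨k - 1, by omega⟩
      rw [hΦ _ _ h]
      exact (zigZagStep_zigzag hrel habs hβ k l (by omega)).2
    · simp [BoundaryControlled, hdeg k l h]
  refine ⟨hdeg, DT_eq_of_zigzag _ hdeg (fun g => ?_) (fun k l h g => ?_),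
    fun k l hl g hg => (hbc k l hl).res_eq_zero g fun i => D.rHom_Grel _ (hg i),
    fun k l hl g g' hgg => (hbc k l hl).1 g g' (funext hgg)⟩
  · simp [hΦ 0 m (zero_add m), zigzag, hβ]
  · rw [hΦ (k + 1) l (by omega), hΦ k (l + 1) (by omega)]
    exact (zigZagStep_zigzag hrel habs hβ k l h).1 g

end ZigZag

end FullGeom

theorem exists_bar_phi_general (n : ℕ) (hn : 1 ≤ n) (D : FullGeom n)
    (hrel : D.RelAcyclic) (habs : D.AbsAcyclic) :
    ∃ φb : GCT D.GM D.Fm, D.BarPhi φb := by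
  obtain ⟨m, rfl⟩ : ∃ m, n = m + 1 := ⟨n - 1, by omega⟩
  obtain ⟨β, hβ⟩ := habs.2
  exact ⟨D.zigzagCochain β, FullGeom.barPhi_zigzagCochain hrel habs (hβ rfl)⟩

theorem exists_bar_phi (n : ℕ) (hn : 1 ≤ n) (D : FullGeom n)
    (hrel : D.RelAcyclic) (habs : D.AbsAcyclic) (hsph : D.SphereBoundary)
    (hsurj : D.ResSurj) :
    ∃ φb : GCT D.GM D.Fm, D.BarPhi φb :=
  exists_bar_phi_general n hn D hrel habs

end TsuboiEuler
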